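/- arXiv:2406.16647 — 4 statements merged into one kernel-verified Lean document; each statement's English description precedes it below -/
import Mathlib

section
/- For every h ∈ ℕ, every c ∈ {0, 1, 2}, and all integers t, k ≥ 1, the Dyck grid D^{(h,c)}_{tk} contains a half-integral packing of size k of copies of D^{(h,c)}_t; that is, there are k subgraphs of D^{(h,c)}_{tk}, each containing D^{(h,c)}_t as a minor, such that every vertex belongs to at most two of them. (Proposition 2.3 of the paper.) -/
open SimpleGraph

/-- `H` is a minor of `G`: there is a family of pairwise disjoint nonempty subsets of `V(G)`,
one for each vertex of `H`, each inducing a connected subgraph of `G`, such that every edge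
of `H` is realized by an edge of `G` between the corresponding branch sets. -/
def IsMinorOf {V : Type*} {W : Type*} (H : SimpleGraph V) (G : SimpleGraph W) : Prop :=
  ∃ X : V → Set W,
    (∀ a, (X a).Nonempty) ∧
    (∀ a b, a ≠ b → Disjoint (X a) (X b)) ∧
    (∀ a, (G.induce (X a)).Connected) ∧
    ∀ a b, H.Adj a b → ∃ x ∈ X a, ∃ y ∈ X b, G.Adj x y

/-- A half-integral `H`-packing of size `k` in `G` : `k` subgraphs of `G`, each containing `H`
as a minor, such that every vertex of `G` belongs to at most two of them. -/
def HasHalfPacking {V : Type*} {W : Type*} (H : SimpleGraph V) (G : SimpleGraph W)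
    (k : ℕ) : Prop :=
  ∃ M : Fin k → G.Subgraph,
    (∀ w : W, ({i : Fin k | w ∈ (M i).verts}).ncard ≤ 2) ∧
    ∀ i, IsMinorOf H ((M i).coe)

/-- The adjacency relation of the `(m, n)`-cylindrical grid: the Cartesian product of a path on
`m` vertices with a cycle on `n` vertices.  Vertex `v^i_j` is `(i, j)` (0-based first index,
second index taken in `ZMod n`). -/
def cylRel (m n : ℕ) (p q : Fin m × ZMod n) : Prop :=
  (p.1 = q.1 ∧ q.2 = p.2 + 1) ∨ (p.2 = q.2 ∧ (p.1 : ℕ) + 1 = (q.1 : ℕ))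

/-- The Dyck grid `D^{(h,c)}_k`: the `(k, 4k(1+h+c))`-cylindrical grid together with, for each
position `pos ∈ {2, …, h+1}`, the handle edges
`v^1_{4k(pos−1)+j} v^1_{4k(pos−1)+3k−j+1}` and `v^1_{4k(pos−1)+k+j} v^1_{4k(pos−1)+4k−j+1}`
(`j ∈ [k]`), and for each position `pos ∈ {h+2, …, h+1+c}` the cross-cap edges
`v^1_{4k(pos−1)+j} v^1_{4k(pos−1)+2k+j}` (`j ∈ [2k]`), all on the first cycle. -/
def dyckGrid (h c k : ℕ) : SimpleGraph (Fin k × ZMod (4 * k * (1 + h + c))) :=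
  SimpleGraph.fromRel fun p q =>
    cylRel k (4 * k * (1 + h + c)) p q ∨
    ((p.1 : ℕ) = 0 ∧ (q.1 : ℕ) = 0 ∧
      ((∃ pos : ℕ, 2 ≤ pos ∧ pos ≤ h + 1 ∧ ∃ j : ℕ, 1 ≤ j ∧ j ≤ k ∧
          ((p.2 = ((4 * k * (pos - 1) + j : ℕ) : ZMod (4 * k * (1 + h + c))) ∧
            q.2 = ((4 * k * (pos - 1) + 3 * k - j + 1 : ℕ) : ZMod (4 * k * (1 + h + c)))) ∨
           (p.2 = ((4 * k * (pos - 1) + k + j : ℕ) : ZMod (4 * k * (1 + h + c))) ∧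
            q.2 = ((4 * k * (pos - 1) + 4 * k - j + 1 : ℕ) : ZMod (4 * k * (1 + h + c)))))) ∨
       (∃ pos : ℕ, h + 2 ≤ pos ∧ pos ≤ h + 1 + c ∧ ∃ j : ℕ, 1 ≤ j ∧ j ≤ 2 * k ∧
          (p.2 = ((4 * k * (pos - 1) + j : ℕ) : ZMod (4 * k * (1 + h + c))) ∧
           q.2 = ((4 * k * (pos - 1) + 2 * k + j : ℕ) : ZMod (4 * k * (1 + h + c)))))))

/-! Cut the `t * k` rows of `D_{tk}` into `k` bands of `t` consecutive rows, and each column of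
`D_t` into a block of `k` consecutive columns. The `i`-th copy of `D_t` lives on the `i`-th band:
vertex `(r, j)` is contracted from the `k` columns of block `j` in row `i * t + r`. Handle and
cross-cap edges sit on the first row, so each first-row branch set is extended by a vertical path
from its band up to row `0`, in the `i`-th column of its block counted from the right (the
`(k - 1 - i)`-th one in the second half of a handle block, as a handle reverses columns). Bands are
disjoint and paths of distinct copies use distinct columns, so every vertex lies in at most two
copies. -/

theorem Set.ncard_le_two_of_subset_pair {α : Type*} {s : Set α} {a b : α} (hs : s ⊆ {a, b}) :
    s.ncard ≤ 2 :=
  (Set.ncard_le_ncard hs (Set.toFinite _)).trans <|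
    (Set.ncard_insert_le a {b}).trans (by rw [Set.ncard_singleton])

theorem ZMod.natCast_ne_natCast_of_lt {N u v : ℕ} (huv : u < v) (hvu : v - u < N) :
    (u : ZMod N) ≠ (v : ZMod N) := by
  rw [ne_eq, ZMod.natCast_eq_natCast_iff, Nat.modEq_iff_dvd' huv.le]
  intro hdvd
  have := Nat.le_of_dvd (by omega) hdvd
  omega

section MinorModels

variable {V W : Type*}

structure IsMinorModel (H : SimpleGraph V) (G : SimpleGraph W) (X : V → Set W) : Prop where
  nonempty : ∀ a, (X a).Nonempty
  disjoint : ∀ a b, a ≠ b → Disjoint (X a) (X b)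
  connected : ∀ a, (G.induce (X a)).Connected
  adj : ∀ a b, H.Adj a b → ∃ x ∈ X a, ∃ y ∈ X b, G.Adj x y

theorem IsMinorModel.isMinorOf_induce {H : SimpleGraph V} {G : SimpleGraph W} {X : V → Set W}
    (hX : IsMinorModel H G X) {S : Set W} (hXS : ∀ a, X a ⊆ S) :
    IsMinorOf H ((⊤ : G.Subgraph).induce S).coe := by
  refine ⟨fun a => Subtype.val ⁻¹' X a, fun a => ?_,
    fun a b hab => (hX.disjoint a b hab).preimage _, fun a => ?_, fun a b hab => ?_⟩
  · obtain ⟨x, hx⟩ := hX.nonempty a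
    exact ⟨⟨x, hXS a hx⟩, hx⟩
  · let φ : G.induce (X a) →g ((⊤ : G.Subgraph).induce S).coe.induce (Subtype.val ⁻¹' X a) :=
      { toFun := fun x => ⟨⟨x, hXS a x.2⟩, x.2⟩
        map_rel' := fun {x y} hxy => ⟨hXS a x.2, hXS a y.2, hxy⟩ }
    exact (hX.connected a).map φ fun y => ⟨⟨y.1.1, y.2⟩, rfl⟩
  · obtain ⟨x, hx, y, hy, hxy⟩ := hX.adj a b hab
    exact ⟨⟨x, hXS a hx⟩, hx, ⟨y, hXS b hy⟩, hy, hXS a hx, hXS b hy, hxy⟩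

theorem hasHalfPacking_of_isMinorModel {H : SimpleGraph V} {G : SimpleGraph W} {k : ℕ}
    (S : Fin k → Set W) (X : Fin k → V → Set W) (hS : ∀ w, {i | w ∈ S i}.ncard ≤ 2)
    (hX : ∀ i, IsMinorModel H G (X i)) (hXS : ∀ i a, X i a ⊆ S i) :
    HasHalfPacking H G k :=
  ⟨fun i => (⊤ : G.Subgraph).induce (S i), hS, fun i => (hX i).isMinorOf_induce (hXS i)⟩

theorem exists_adj_of_fromRel_adj {r : V → V → Prop} {G : SimpleGraph W} {X : V → Set W}
    (hr : ∀ a b, r a b → ∃ x ∈ X a, ∃ y ∈ X b, G.Adj x y) (a b : V)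
    (hab : (fromRel r).Adj a b) :
    ∃ x ∈ X a, ∃ y ∈ X b, G.Adj x y := by
  obtain ⟨-, hab | hba⟩ := fromRel_adj r a b |>.1 hab
  · exact hr a b hab
  · obtain ⟨y, hy, x, hx, hyx⟩ := hr b a hba
    exact ⟨x, hx, y, hy, hyx.symm⟩

theorem connected_induce_range {G : SimpleGraph W} {m : ℕ} [NeZero m] (f : Fin m → W)
    (hf : ∀ i j : Fin m, i.val + 1 = j.val → G.Adj (f i) (f j)) :
    (G.induce (Set.range f)).Connected := by
  obtain ⟨m, rfl⟩ := Nat.exists_eq_add_one_of_ne_zero (NeZero.ne m)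
  let φ : pathGraph (m + 1) →g G.induce (Set.range f) :=
    { toFun := fun i => ⟨f i, i, rfl⟩
      map_rel' := fun {i j} hij => by
        rcases pathGraph_adj.1 hij with hij | hji
        · exact hf i j hij
        · exact (hf j i hji).symm }
  exact (pathGraph_connected m).map φ fun ⟨_, i, hi⟩ => ⟨i, Subtype.ext hi⟩

end MinorModels

namespace DyckGrid

section Cylinder

variable {h c m : ℕ}

theorem four_mul_le_cycleLength (h c m : ℕ) : 4 * m ≤ 4 * m * (1 + h + c) :=
  Nat.le_mul_of_pos_right _ (by omega)

theorem adj_col_succ (hm : 0 < m) (r : Fin m) (a : ZMod (4 * m * (1 + h + c))) :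
    (dyckGrid h c m).Adj (r, a) (r, a + 1) := by
  have : Fact (1 < 4 * m * (1 + h + c)) := ⟨by have := four_mul_le_cycleLength h c m; omega⟩
  rw [dyckGrid, fromRel_adj]
  exact ⟨by simp, Or.inl (Or.inl (Or.inl ⟨rfl, rfl⟩))⟩

theorem adj_row_succ {r r' : Fin m} (hr : r.val + 1 = r'.val) (a : ZMod (4 * m * (1 + h + c))) :
    (dyckGrid h c m).Adj (r, a) (r', a) := by
  rw [dyckGrid, fromRel_adj]
  exact ⟨by simp [Fin.ext_iff]; omega, Or.inl (Or.inl (Or.inr ⟨rfl, hr⟩))⟩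

theorem connected_induce_rowSegment {r : ℕ} (hr : r < m) (b : ZMod (4 * m * (1 + h + c)))
    {k : ℕ} (hk : 0 < k) :
    ((dyckGrid h c m).induce {p | p.1.val = r ∧ ∃ s < k, p.2 = b - s}).Connected := by
  have : NeZero k := ⟨hk.ne'⟩
  have hrange : {p : Fin m × ZMod (4 * m * (1 + h + c)) | p.1.val = r ∧ ∃ s < k, p.2 = b - s} =
      Set.range fun s : Fin k => ((⟨r, hr⟩ : Fin m), b - (s.val : ZMod _)) := by
    ext ⟨p, a⟩
    simp only [Set.mem_ofPred_eq, Set.mem_range, Prod.mk.injEq, Fin.ext_iff]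
    constructor
    · rintro ⟨rfl, s, hs, rfl⟩
      exact ⟨⟨s, hs⟩, rfl, rfl⟩
    · rintro ⟨s, rfl, rfl⟩
      exact ⟨rfl, s, s.isLt, rfl⟩
  rw [hrange]
  refine connected_induce_range _ fun i j hij => ?_
  have hcol : b - (i.val : ZMod (4 * m * (1 + h + c))) = b - (j.val : ZMod _) + 1 := by
    rw [← hij]; push_cast; ring
  rw [hcol]
  exact (adj_col_succ (by omega) _ _).symm

theorem connected_induce_colSegment {r : ℕ} (hr : r < m) (a : ZMod (4 * m * (1 + h + c))) :
    ((dyckGrid h c m).induce {p | p.1.val ≤ r ∧ p.2 = a}).Connected := by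
  have hrange : {p : Fin m × ZMod (4 * m * (1 + h + c)) | p.1.val ≤ r ∧ p.2 = a} =
      Set.range fun q : Fin (r + 1) => (Fin.castLE hr q, a) := by
    ext ⟨p, b⟩
    simp only [Set.mem_ofPred_eq, Set.mem_range, Prod.mk.injEq, Fin.ext_iff, Fin.val_castLE]
    constructor
    · rintro ⟨hp, rfl⟩
      exact ⟨⟨p, by omega⟩, rfl, rfl⟩
    · rintro ⟨q, hq, rfl⟩
      exact ⟨by omega, rfl⟩
  rw [hrange]
  exact connected_induce_range _ fun i j hij => adj_row_succ (by simpa using hij) a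

theorem adj_handle_left {pos J : ℕ} (hpos : 2 ≤ pos) (hpos' : pos ≤ h + 1) (hJ : 1 ≤ J)
    (hJ' : J ≤ m) {top : Fin m} (htop : top.val = 0) :
    (dyckGrid h c m).Adj (top, ((4 * m * (pos - 1) + J : ℕ) : ZMod (4 * m * (1 + h + c))))
      (top, ((4 * m * (pos - 1) + 3 * m - J + 1 : ℕ) : ZMod (4 * m * (1 + h + c)))) := by
  have := four_mul_le_cycleLength h c m
  rw [dyckGrid, fromRel_adj]
  refine ⟨fun he => ZMod.natCast_ne_natCast_of_lt (by omega) (by omega) (congrArg Prod.snd he),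
    Or.inl (Or.inr ⟨htop, htop, Or.inl ⟨pos, hpos, hpos', J, hJ, hJ', Or.inl ⟨rfl, rfl⟩⟩⟩)⟩

theorem adj_handle_right {pos J : ℕ} (hpos : 2 ≤ pos) (hpos' : pos ≤ h + 1) (hJ : 1 ≤ J)
    (hJ' : J ≤ m) {top : Fin m} (htop : top.val = 0) :
    (dyckGrid h c m).Adj (top, ((4 * m * (pos - 1) + m + J : ℕ) : ZMod (4 * m * (1 + h + c))))
      (top, ((4 * m * (pos - 1) + 4 * m - J + 1 : ℕ) : ZMod (4 * m * (1 + h + c)))) := by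
  have := four_mul_le_cycleLength h c m
  rw [dyckGrid, fromRel_adj]
  refine ⟨fun he => ZMod.natCast_ne_natCast_of_lt (by omega) (by omega) (congrArg Prod.snd he),
    Or.inl (Or.inr ⟨htop, htop, Or.inl ⟨pos, hpos, hpos', J, hJ, hJ', Or.inr ⟨rfl, rfl⟩⟩⟩)⟩

theorem adj_crossCap {pos J : ℕ} (hpos : h + 2 ≤ pos) (hpos' : pos ≤ h + 1 + c) (hJ : 1 ≤ J)
    (hJ' : J ≤ 2 * m) {top : Fin m} (htop : top.val = 0) :
    (dyckGrid h c m).Adj (top, ((4 * m * (pos - 1) + J : ℕ) : ZMod (4 * m * (1 + h + c))))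
      (top, ((4 * m * (pos - 1) + 2 * m + J : ℕ) : ZMod (4 * m * (1 + h + c)))) := by
  have := four_mul_le_cycleLength h c m
  rw [dyckGrid, fromRel_adj]
  refine ⟨fun he => ZMod.natCast_ne_natCast_of_lt (by omega) (by omega) (congrArg Prod.snd he),
    Or.inl (Or.inr ⟨htop, htop, Or.inr ⟨pos, hpos, hpos', J, hJ, hJ', rfl, rfl⟩⟩)⟩

end Cylinder

section BlockColumns

/-- Column `j` of the short cycle is blown up to the columns `k * j - s`, `s < k`, of the long one;
ending the block at `k * j` makes the `1`-based edge positions of `dyckGrid` scale exactly. -/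
def blockCol (N k : ℕ) {n : ℕ} (j : ZMod n) (s : ℕ) : ZMod N := ((k * j.val : ℕ) : ZMod N) - s

variable {N k n : ℕ}

theorem blockCol_natCast (hN : N = k * n) (A s : ℕ) :
    blockCol N k (A : ZMod n) s = ((k * A : ℕ) : ZMod N) - s := by
  rw [blockCol, ZMod.val_natCast, ← Nat.mul_mod_mul_left, ← hN, ZMod.natCast_mod]

theorem blockCol_injective [NeZero n] (hN : N = k * n) {j j' : ZMod n} {s s' : ℕ}
    (hs : s < k) (hs' : s' < k) (he : blockCol N k j s = blockCol N k j' s') :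
    j = j' ∧ s = s' := by
  have hcast : ((k * j.val + s' : ℕ) : ZMod N) = ((k * j'.val + s : ℕ) : ZMod N) := by
    unfold blockCol at he
    push_cast at he ⊢
    linear_combination he
  have hlt : ∀ (x : ZMod n) (y : ℕ), y < k → k * x.val + y < N := fun x y hy => by
    have := Nat.mul_le_mul_left k (ZMod.val_lt x : x.val + 1 ≤ n)
    rw [Nat.mul_add_one] at this
    omega
  have hnat := congrArg ZMod.val hcast
  rw [ZMod.val_natCast_of_lt (hlt j s' hs'), ZMod.val_natCast_of_lt (hlt j' s hs)] at hnat
  have hval := congrArg (· / k) hnat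
  simp only [Nat.mul_add_div (by omega : 0 < k), Nat.div_eq_of_lt hs, Nat.div_eq_of_lt hs',
    add_zero] at hval
  refine ⟨ZMod.val_injective n hval, ?_⟩
  rw [hval] at hnat
  omega

theorem blockCol_add_one [NeZero n] (hN : N = k * n) (hk : 0 < k) (j : ZMod n) :
    blockCol N k (j + 1) (k - 1) = blockCol N k j 0 + 1 := by
  rw [← ZMod.natCast_zmod_val j, ← Nat.cast_add_one, blockCol_natCast hN, blockCol_natCast hN]
  push_cast [Nat.cast_sub hk]
  ring

end BlockColumns

section Copies

variable {h c t k : ℕ}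

theorem cycleLength_mul (h c t k : ℕ) :
    4 * (t * k) * (1 + h + c) = k * (4 * t * (1 + h + c)) := by
  ring

def InHandleSecondHalf (h c t : ℕ) (a : ZMod (4 * t * (1 + h + c))) : Prop :=
  ∃ pos, 2 ≤ pos ∧ pos ≤ h + 1 ∧ ∃ u, 2 * t + 1 ≤ u ∧ u ≤ 4 * t ∧
    a = ((4 * t * (pos - 1) + u : ℕ) : ZMod (4 * t * (1 + h + c)))

theorem not_inHandleSecondHalf_mul_add (q : ℕ) {u : ℕ} (hu : 1 ≤ u) (hu' : u ≤ 2 * t) :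
    ¬ InHandleSecondHalf h c t ((4 * t * q + u : ℕ) : ZMod (4 * t * (1 + h + c))) := by
  rintro ⟨pos, -, -, u', hu'1, hu'2, heq⟩
  have hmod : (4 * t * q + u) % (4 * t) = (4 * t * (pos - 1) + u') % (4 * t) :=
    ((ZMod.natCast_eq_natCast_iff _ _ _).1 heq).of_dvd (Dvd.intro _ rfl)
  rw [Nat.mul_add_mod, Nat.mul_add_mod, Nat.mod_eq_of_lt (by omega : u < 4 * t)] at hmod
  rcases hu'2.eq_or_lt with rfl | hlt
  · rw [Nat.mod_self] at hmod
    omega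
  · rw [Nat.mod_eq_of_lt hlt] at hmod
    omega

theorem not_inHandleSecondHalf_of_lt {B : ℕ} (hB : 4 * t * (h + 1) < B)
    (hB' : B ≤ 4 * t * (1 + h + c)) :
    ¬ InHandleSecondHalf h c t (B : ZMod (4 * t * (1 + h + c))) := by
  rintro ⟨pos, -, hpos, u, hu, hu', heq⟩
  have : 4 * t * (pos - 1) + 4 * t ≤ 4 * t * (h + 1) := by
    rw [← Nat.mul_add_one]; exact Nat.mul_le_mul_left _ (by omega)
  exact ZMod.natCast_ne_natCast_of_lt (by omega) (by omega) heq.symm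

open Classical in
noncomputable def copyOffset (h c t k i : ℕ) (a : ZMod (4 * t * (1 + h + c))) : ℕ :=
  if InHandleSecondHalf h c t a then k - 1 - i else i

noncomputable def copyCol (h c t k i : ℕ) (a : ZMod (4 * t * (1 + h + c))) :
    ZMod (4 * (t * k) * (1 + h + c)) :=
  blockCol _ k a (copyOffset h c t k i a)

theorem copyOffset_lt {i : ℕ} (hik : i < k) (a : ZMod (4 * t * (1 + h + c))) :
    copyOffset h c t k i a < k := by
  unfold copyOffset; split <;> omega

theorem eq_of_copyCol_eq (ht : 0 < t) {i i' : ℕ} (hi : i < k) (hi' : i' < k)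
    {a a' : ZMod (4 * t * (1 + h + c))} (he : copyCol h c t k i a = copyCol h c t k i' a') :
    i = i' := by
  have : NeZero (4 * t * (1 + h + c)) := ⟨by positivity⟩
  obtain ⟨rfl, hoff⟩ := blockCol_injective (cycleLength_mul h c t k) (copyOffset_lt hi a)
    (copyOffset_lt hi' a') he
  unfold copyOffset at hoff
  split at hoff <;> omega

theorem copyCol_natCast_of_not {i A : ℕ}
    (hA : ¬ InHandleSecondHalf h c t (A : ZMod (4 * t * (1 + h + c)))) :
    copyCol h c t k i A = ((k * A : ℕ) : ZMod (4 * (t * k) * (1 + h + c))) - i := by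
  rw [copyCol, copyOffset, if_neg hA, blockCol_natCast (cycleLength_mul h c t k)]

theorem copyCol_natCast_of_inHandleSecondHalf {i A : ℕ}
    (hA : InHandleSecondHalf h c t (A : ZMod (4 * t * (1 + h + c)))) :
    copyCol h c t k i A =
      ((k * A : ℕ) : ZMod (4 * (t * k) * (1 + h + c))) - (k - 1 - i : ℕ) := by
  rw [copyCol, copyOffset, if_pos hA, blockCol_natCast (cycleLength_mul h c t k)]

end Copies

section CopyEdges

variable {h c t k i pos j : ℕ}

theorem adj_copyCol_handle_left (hik : i < k) (hpos : 2 ≤ pos) (hpos' : pos ≤ h + 1)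
    (hj : 1 ≤ j) (hj' : j ≤ t) {top : Fin (t * k)} (htop : top.val = 0) :
    (dyckGrid h c (t * k)).Adj
      (top, copyCol h c t k i ((4 * t * (pos - 1) + j : ℕ) : ZMod (4 * t * (1 + h + c))))
      (top, copyCol h c t k i ((4 * t * (pos - 1) + 3 * t - j + 1 : ℕ) : ZMod _)) := by
  have hkj : k ≤ k * j := Nat.le_mul_of_pos_right k hj
  have hkj' : k * j ≤ t * k := by rw [mul_comm t]; exact Nat.mul_le_mul_left k hj'
  rw [copyCol_natCast_of_not (not_inHandleSecondHalf_mul_add (pos - 1) hj (by omega)),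
    copyCol_natCast_of_inHandleSecondHalf
      ⟨pos, hpos, hpos', 3 * t - j + 1, by omega, by omega, by congr 1; omega⟩]
  convert adj_handle_left hpos hpos' (J := k * j - i) (by omega) (by omega) htop using 3
  · push_cast [Nat.cast_sub (by omega : i ≤ k * j)]
    ring
  · push_cast [Nat.cast_sub (by omega : i ≤ k * j), Nat.cast_sub (by omega : i ≤ k - 1),
      Nat.cast_sub (by omega : 1 ≤ k), Nat.cast_sub (by omega : j ≤ 4 * t * (pos - 1) + 3 * t),
      Nat.cast_sub (by omega : k * j - i ≤ 4 * (t * k) * (pos - 1) + 3 * (t * k))]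
    ring

theorem adj_copyCol_handle_right (hik : i < k) (hpos : 2 ≤ pos) (hpos' : pos ≤ h + 1)
    (hj : 1 ≤ j) (hj' : j ≤ t) {top : Fin (t * k)} (htop : top.val = 0) :
    (dyckGrid h c (t * k)).Adj
      (top, copyCol h c t k i ((4 * t * (pos - 1) + t + j : ℕ) : ZMod (4 * t * (1 + h + c))))
      (top, copyCol h c t k i ((4 * t * (pos - 1) + 4 * t - j + 1 : ℕ) : ZMod _)) := by
  have hkj : k ≤ k * j := Nat.le_mul_of_pos_right k hj
  have hkj' : k * j ≤ t * k := by rw [mul_comm t]; exact Nat.mul_le_mul_left k hj'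
  have ha : ¬ InHandleSecondHalf h c t ((4 * t * (pos - 1) + t + j : ℕ) : ZMod _) := by
    rw [show 4 * t * (pos - 1) + t + j = 4 * t * (pos - 1) + (t + j) by omega]
    exact not_inHandleSecondHalf_mul_add _ (by omega) (by omega)
  rw [copyCol_natCast_of_not ha, copyCol_natCast_of_inHandleSecondHalf
      ⟨pos, hpos, hpos', 4 * t - j + 1, by omega, by omega, by congr 1; omega⟩]
  convert adj_handle_right hpos hpos' (J := k * j - i) (by omega) (by omega) htop using 3
  · push_cast [Nat.cast_sub (by omega : i ≤ k * j)]
    ring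
  · push_cast [Nat.cast_sub (by omega : i ≤ k * j), Nat.cast_sub (by omega : i ≤ k - 1),
      Nat.cast_sub (by omega : 1 ≤ k), Nat.cast_sub (by omega : j ≤ 4 * t * (pos - 1) + 4 * t),
      Nat.cast_sub (by omega : k * j - i ≤ 4 * (t * k) * (pos - 1) + 4 * (t * k))]
    ring

theorem adj_copyCol_crossCap (hik : i < k) (hpos : h + 2 ≤ pos) (hpos' : pos ≤ h + 1 + c)
    (hj : 1 ≤ j) (hj' : j ≤ 2 * t) {top : Fin (t * k)} (htop : top.val = 0) :
    (dyckGrid h c (t * k)).Adj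
      (top, copyCol h c t k i ((4 * t * (pos - 1) + j : ℕ) : ZMod (4 * t * (1 + h + c))))
      (top, copyCol h c t k i ((4 * t * (pos - 1) + 2 * t + j : ℕ) : ZMod _)) := by
  have hkj : k ≤ k * j := Nat.le_mul_of_pos_right k hj
  have hkj' : k * j ≤ 2 * (t * k) := by
    rw [mul_comm t, ← mul_assoc, mul_comm 2 k, mul_assoc]; exact Nat.mul_le_mul_left k hj'
  have hlo : 4 * t * (h + 1) ≤ 4 * t * (pos - 1) := Nat.mul_le_mul_left _ (by omega)
  have hhi : 4 * t * (pos - 1) + 4 * t ≤ 4 * t * (1 + h + c) := by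
    rw [← Nat.mul_add_one]; exact Nat.mul_le_mul_left _ (by omega)
  rw [copyCol_natCast_of_not (not_inHandleSecondHalf_of_lt (by omega) (by omega)),
    copyCol_natCast_of_not (not_inHandleSecondHalf_of_lt (by omega) (by omega))]
  convert adj_crossCap hpos hpos' (J := k * j - i) (by omega) (by omega) htop using 3 <;>
  · push_cast [Nat.cast_sub (by omega : i ≤ k * j)]
    ring

end CopyEdges

section Packing

variable {h c t k i : ℕ}

def copyVerts (h c t k i : ℕ) : Set (Fin (t * k) × ZMod (4 * (t * k) * (1 + h + c))) :=
  {p | (i * t ≤ p.1.val ∧ p.1.val < i * t + t) ∨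
    (p.1.val ≤ i * t ∧ ∃ a, p.2 = copyCol h c t k i a)}

def branchSet (h c t k i : ℕ) (r : Fin t) (j : ZMod (4 * t * (1 + h + c))) :
    Set (Fin (t * k) × ZMod (4 * (t * k) * (1 + h + c))) :=
  {p | p.1.val = i * t + r.val ∧ ∃ s < k, p.2 = blockCol _ k j s} ∪
    {p | r.val = 0 ∧ p.1.val ≤ i * t ∧ p.2 = copyCol h c t k i j}

theorem band_lt {r : ℕ} (hik : i < k) (hr : r < t) : i * t + r < t * k := by
  nlinarith

theorem branchSet_subset_copyVerts (r : Fin t) (j : ZMod (4 * t * (1 + h + c))) :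
    branchSet h c t k i r j ⊆ copyVerts h c t k i := by
  rintro p (⟨hp, -⟩ | ⟨-, hp, hcol⟩)
  · exact Or.inl ⟨by omega, by omega⟩
  · exact Or.inr ⟨hp, j, hcol⟩

theorem mem_branchSet_row (hik : i < k) (r : Fin t) (j : ZMod (4 * t * (1 + h + c))) {s : ℕ}
    (hs : s < k) :
    ((⟨i * t + r.val, band_lt hik r.isLt⟩ : Fin (t * k)), blockCol _ k j s) ∈
      branchSet h c t k i r j :=
  Or.inl ⟨rfl, s, hs, rfl⟩

theorem mem_branchSet_top {r : Fin t} (hr : r.val = 0) (j : ZMod (4 * t * (1 + h + c)))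
    {top : Fin (t * k)} (htop : top.val = 0) :
    (top, copyCol h c t k i j) ∈ branchSet h c t k i r j :=
  Or.inr ⟨hr, show top.val ≤ i * t by omega, rfl⟩

theorem exists_col_of_mem_branchSet (hik : i < k) {r : Fin t} {j : ZMod (4 * t * (1 + h + c))}
    {p : Fin (t * k) × ZMod (4 * (t * k) * (1 + h + c))} (hp : p ∈ branchSet h c t k i r j) :
    ∃ s < k, p.2 = blockCol _ k j s := by
  rcases hp with ⟨-, hcol⟩ | ⟨-, -, hcol⟩
  · exact hcol
  · exact ⟨_, copyOffset_lt hik j, hcol⟩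

theorem row_of_mem_branchSet {r : Fin t} {j : ZMod (4 * t * (1 + h + c))}
    {p : Fin (t * k) × ZMod (4 * (t * k) * (1 + h + c))} (hp : p ∈ branchSet h c t k i r j) :
    p.1.val = i * t + r.val ∨ (r.val = 0 ∧ p.1.val ≤ i * t) := by
  rcases hp with ⟨hrow, -⟩ | ⟨hr, hrow, -⟩
  · exact Or.inl hrow
  · exact Or.inr ⟨hr, hrow⟩

theorem disjoint_branchSet (hik : i < k) {r r' : Fin t} {j j' : ZMod (4 * t * (1 + h + c))}
    (hne : (r, j) ≠ (r', j')) :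
    Disjoint (branchSet h c t k i r j) (branchSet h c t k i r' j') := by
  have : NeZero (4 * t * (1 + h + c)) := ⟨by have := r.pos; positivity⟩
  rw [Set.disjoint_left]
  intro p hp hp'
  obtain ⟨s, hs, hps⟩ := exists_col_of_mem_branchSet hik hp
  obtain ⟨s', hs', hps'⟩ := exists_col_of_mem_branchSet hik hp'
  obtain ⟨rfl, -⟩ := blockCol_injective (cycleLength_mul h c t k) hs hs' (hps.symm.trans hps')
  have hrr : r.val ≠ r'.val := fun hrr => hne (by rw [Fin.ext hrr])
  have := row_of_mem_branchSet hp
  have := row_of_mem_branchSet hp'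
  omega

theorem connected_induce_branchSet (hik : i < k) (r : Fin t) (j : ZMod (4 * t * (1 + h + c))) :
    ((dyckGrid h c (t * k)).induce (branchSet h c t k i r j)).Connected := by
  have hrow := connected_induce_rowSegment (band_lt hik r.isLt) ((k * j.val : ℕ) : ZMod _)
    (h := h) (c := c) (k := k) (by omega)
  by_cases hr : r.val = 0
  · have hcol := connected_induce_colSegment (band_lt hik r.isLt) (copyCol h c t k i j)
      (h := h) (c := c)
    rw [hr, Nat.add_zero] at hcol
    have hcolSet : {p : Fin (t * k) × ZMod (4 * (t * k) * (1 + h + c)) |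
        r.val = 0 ∧ p.1.val ≤ i * t ∧ p.2 = copyCol h c t k i j} =
        {p | p.1.val ≤ i * t ∧ p.2 = copyCol h c t k i j} := by
      simp only [hr, true_and]
    rw [branchSet, hcolSet]
    refine induce_union_connected hrow.preconnected hcol.preconnected
      ⟨(⟨i * t, band_lt hik r.pos⟩, copyCol h c t k i j), ?_, le_rfl, rfl⟩
    exact ⟨show i * t = i * t + r.val by omega, _, copyOffset_lt hik j, rfl⟩
  · have hcolSet : {p : Fin (t * k) × ZMod (4 * (t * k) * (1 + h + c)) |
        r.val = 0 ∧ p.1.val ≤ i * t ∧ p.2 = copyCol h c t k i j} = ∅ := by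
      simp only [hr, false_and, Set.ofPred_false]
    rw [branchSet, hcolSet, Set.union_empty]
    exact hrow

theorem exists_adj_branchSet_col_succ (hik : i < k) (r : Fin t) (j : ZMod (4 * t * (1 + h + c))) :
    ∃ x ∈ branchSet h c t k i r j, ∃ y ∈ branchSet h c t k i r (j + 1),
      (dyckGrid h c (t * k)).Adj x y := by
  have : NeZero (4 * t * (1 + h + c)) := ⟨by have := r.pos; positivity⟩
  refine ⟨_, mem_branchSet_row hik r j (s := 0) (by omega),
    _, mem_branchSet_row hik r (j + 1) (s := k - 1) (by omega), ?_⟩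
  rw [blockCol_add_one (cycleLength_mul h c t k) (by omega)]
  exact adj_col_succ (Nat.mul_pos r.pos (by omega)) _ _

theorem exists_adj_branchSet_row_succ (hik : i < k) {r r' : Fin t} (hr : r.val + 1 = r'.val)
    (j : ZMod (4 * t * (1 + h + c))) :
    ∃ x ∈ branchSet h c t k i r j, ∃ y ∈ branchSet h c t k i r' j,
      (dyckGrid h c (t * k)).Adj x y :=
  ⟨_, mem_branchSet_row hik r j (s := 0) (by omega), _, mem_branchSet_row hik r' j (s := 0)
    (by omega), adj_row_succ (by simp only; omega) _⟩

theorem exists_adj_branchSet_top {r r' : Fin t} (hr : r.val = 0) (hr' : r'.val = 0)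
    {j j' : ZMod (4 * t * (1 + h + c))} {top : Fin (t * k)} (htop : top.val = 0)
    (hadj : (dyckGrid h c (t * k)).Adj (top, copyCol h c t k i j) (top, copyCol h c t k i j')) :
    ∃ x ∈ branchSet h c t k i r j, ∃ y ∈ branchSet h c t k i r' j',
      (dyckGrid h c (t * k)).Adj x y :=
  ⟨_, mem_branchSet_top hr j htop, _, mem_branchSet_top hr' j' htop, hadj⟩

theorem isMinorModel_branchSet (hik : i < k) :
    IsMinorModel (dyckGrid h c t) (dyckGrid h c (t * k)) fun a => branchSet h c t k i a.1 a.2 where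
  nonempty a := ⟨_, mem_branchSet_row hik a.1 a.2 (s := 0) (by omega)⟩
  disjoint _ _ hab := disjoint_branchSet hik hab
  connected a := connected_induce_branchSet hik a.1 a.2
  adj := exists_adj_of_fromRel_adj fun ⟨r, j⟩ ⟨r', j'⟩ hR => by
    rcases hR with (⟨rfl, rfl⟩ | ⟨rfl, hrr⟩) | ⟨hr, hr', hspecial⟩
    · exact exists_adj_branchSet_col_succ hik r j
    · exact exists_adj_branchSet_row_succ hik hrr j
    · refine exists_adj_branchSet_top hr hr' (top := ⟨0, Nat.mul_pos r.pos (by omega)⟩) rfl ?_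
      rcases hspecial with ⟨pos, hpos, hpos', u, hu, hu', ⟨rfl, rfl⟩ | ⟨rfl, rfl⟩⟩ |
        ⟨pos, hpos, hpos', u, hu, hu', rfl, rfl⟩
      · exact adj_copyCol_handle_left hik hpos hpos' hu hu' rfl
      · exact adj_copyCol_handle_right hik hpos hpos' hu hu' rfl
      · exact adj_copyCol_crossCap hik hpos hpos' hu hu' rfl

theorem ncard_mem_copyVerts_le_two (w : Fin (t * k) × ZMod (4 * (t * k) * (1 + h + c))) :
    {i : Fin k | w ∈ copyVerts h c t k i}.ncard ≤ 2 := by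
  obtain ⟨row, col⟩ := w
  have ht : 0 < t := Nat.pos_of_mul_pos_right row.pos
  let band : Fin k := ⟨row.val / t, Nat.div_lt_of_lt_mul row.isLt⟩
  have eq_band : ∀ i : Fin k, i.val * t ≤ row.val → row.val < i.val * t + t → i = band :=
    fun i hlo hhi => Fin.ext (Nat.div_eq_of_lt_le hlo (by rwa [Nat.add_one_mul])).symm
  by_cases hcol : ∃ (i₁ : Fin k) (a : ZMod (4 * t * (1 + h + c))), col = copyCol h c t k i₁ a
  · obtain ⟨i₁, a₁, h₁⟩ := hcol
    refine Set.ncard_le_two_of_subset_pair (a := band) (b := i₁) ?_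
    rintro i (⟨hlo, hhi⟩ | ⟨-, a, ha⟩)
    · exact Or.inl (eq_band i hlo hhi)
    · exact Or.inr (Fin.ext (eq_of_copyCol_eq ht i.isLt i₁.isLt (ha.symm.trans h₁)))
  · refine Set.ncard_le_two_of_subset_pair (a := band) (b := band) ?_
    rintro i (⟨hlo, hhi⟩ | ⟨-, a, ha⟩)
    · exact Or.inl (eq_band i hlo hhi)
    · exact absurd ⟨i, a, ha⟩ hcol

end Packing

end DyckGrid

theorem stmt_4_general (h c : ℕ) (t k : ℕ) :
    HasHalfPacking (dyckGrid h c t) (dyckGrid h c (t * k)) k :=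
  hasHalfPacking_of_isMinorModel (fun i => DyckGrid.copyVerts h c t k i)
    (fun i a => DyckGrid.branchSet h c t k i a.1 a.2) DyckGrid.ncard_mem_copyVerts_le_two
    (fun i => DyckGrid.isMinorModel_branchSet i.isLt)
    (fun _ a => DyckGrid.branchSet_subset_copyVerts a.1 a.2)

/-- Proposition 2.3. For every `h ∈ ℕ`, every `c ∈ {0,1,2}`, and all integers
`t, k ≥ 1`, the Dyck grid `D^{(h,c)}_{tk}` contains a half-integral packing of size `k` of copies
of `D^{(h,c)}_t`. -/
theorem stmt_4 (h c : ℕ) (hc : c ≤ 2) (t k : ℕ) (ht : 1 ≤ t) (hk : 1 ≤ k) :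
    HasHalfPacking (dyckGrid h c t) (dyckGrid h c (t * k)) k :=
  stmt_4_general h c t k
end

section
/- Let H be a connected graph with at least one vertex, let G be a graph, and let (X, Y) be a separation of G such that (X, X ∩ Y) is an H-local cover of G and the induced subgraph G[Y ∖ X] has no H-minor. Then X ∩ Y is an H-cover of G, i.e., G − (X ∩ Y) has no H-minor. (Observation 5.10 of the paper, stated for connected H, for which npl(H) = H when H is non-planar.) -/
open SimpleGraph

/-- The graph obtained from `M` by dissolving (suppressing) all vertices outside `T`:
two vertices of `T` are adjacent iff they are joined in `M` by a walk of positive length all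
of whose internal vertices lie outside `T`. -/
def dissolve {W : Type*} (M : SimpleGraph W) (T : Set W) : SimpleGraph T :=
  SimpleGraph.fromRel fun a b =>
    ∃ p : M.Walk (a : W) (b : W),
      ∀ v ∈ p.support, v ≠ (a : W) → v ≠ (b : W) → v ∉ T

/-- `(M, T)` is an `H`-expansion (here `M` is a subgraph of an ambient graph `G`):
`T ⊆ V(M)`, every vertex of `V(M) ∖ T` has degree `2` in `M`, and the graph obtained from `M`
by dissolving all vertices not in `T` contains `H` as a minor. -/
def IsExpansion {V : Type*} {W : Type*} (H : SimpleGraph V) {G : SimpleGraph W}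
    (M : G.Subgraph) (T : Set W) : Prop :=
  T ⊆ M.verts ∧
  (∀ v ∈ M.verts, v ∉ T → (M.neighborSet v).ncard = 2) ∧
  IsMinorOf H (dissolve M.coe {v : M.verts | (v : W) ∈ T})

/-- `M` is an `H`-inflated copy in `G`: `(M, T)` is a minimal `H`-expansion for some `T`. -/
def IsInflatedCopy {V : Type*} {W : Type*} (H : SimpleGraph V) {G : SimpleGraph W}
    (M : G.Subgraph) : Prop :=
  ∃ T : Set W, IsExpansion H M T ∧
    ∀ M' : G.Subgraph, M' ≤ M → IsExpansion H M' T → M' = M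

/-- `(X, A)` is an `H`-local cover of `G`: `A ⊆ X ⊆ V(G)` and every `H`-inflated copy `M` in `G`
meeting `X` also meets `A`. -/
def IsLocalCover {V : Type*} {W : Type*} (H : SimpleGraph V) (G : SimpleGraph W)
    (X A : Set W) : Prop :=
  A ⊆ X ∧
  ∀ M : G.Subgraph, IsInflatedCopy H M →
    (M.verts ∩ X).Nonempty → (M.verts ∩ A).Nonempty

/-!
A model of the connected graph `H` in `G - (X ∩ Y)` cannot use edges across the separation, so it
lies entirely in `G[X ∖ Y]` or entirely in `G[Y ∖ X]`. The second is excluded by hypothesis. In the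
first, the subgraph of `G` induced on `X ∖ Y` is an `H`-expansion with every vertex terminal; a
minimal `H`-expansion below it with the same terminals is an `H`-inflated copy whose vertex set is
exactly `X ∖ Y`, so it meets `X` but not `X ∩ Y`, contradicting the local cover property.
-/

section Minor

variable {V α β γ : Type*} {H : SimpleGraph V} {G : SimpleGraph α} {G' : SimpleGraph β}

structure IsMinorModel_s5 (H : SimpleGraph V) (G : SimpleGraph α) (Xs : V → Set α) : Prop where
  nonempty : ∀ a, (Xs a).Nonempty
  disjoint : ∀ a b, a ≠ b → Disjoint (Xs a) (Xs b)
  connected : ∀ a, (G.induce (Xs a)).Connected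
  exists_adj : ∀ a b, H.Adj a b → ∃ x ∈ Xs a, ∃ y ∈ Xs b, G.Adj x y

lemma isMinorOf_iff : IsMinorOf H G ↔ ∃ Xs, IsMinorModel_s5 H G Xs :=
  ⟨fun ⟨Xs, h₁, h₂, h₃, h₄⟩ => ⟨Xs, h₁, h₂, h₃, h₄⟩, fun ⟨Xs, ⟨h₁, h₂, h₃, h₄⟩⟩ => ⟨Xs, h₁, h₂, h₃, h₄⟩⟩

lemma IsMinorModel_s5.image {Xs : V → Set α} (hXs : IsMinorModel_s5 H G Xs) (f : G →g G')
    (hf : Function.Injective f) : IsMinorModel_s5 H G' (fun a => f '' Xs a) where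
  nonempty a := (hXs.nonempty a).image f
  disjoint a b hab := Set.disjoint_image_of_injective hf (hXs.disjoint a b hab)
  connected a := by
    refine (hXs.connected a).map (induceHom f (Set.mapsTo_image f _)) ?_
    rintro ⟨_, v, hv, rfl⟩
    exact ⟨⟨v, hv⟩, rfl⟩
  exists_adj a b hab := by
    obtain ⟨x, hx, y, hy, hxy⟩ := hXs.exists_adj a b hab
    exact ⟨f x, ⟨x, hx, rfl⟩, f y, ⟨y, hy, rfl⟩, f.map_adj hxy⟩

lemma IsMinorOf.of_hom (h : IsMinorOf H G) (f : G →g G') (hf : Function.Injective f) :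
    IsMinorOf H G' := by
  obtain ⟨Xs, hXs⟩ := isMinorOf_iff.mp h
  exact isMinorOf_iff.mpr ⟨_, hXs.image f hf⟩

lemma IsMinorModel_s5.preimage {Xs : V → Set α} (hXs : IsMinorModel_s5 H G Xs) (f : G' ↪g G)
    (hrange : ∀ a, Xs a ⊆ Set.range f) : IsMinorModel_s5 H G' (fun a => f ⁻¹' Xs a) where
  nonempty a := by
    obtain ⟨x, hx⟩ := hXs.nonempty a
    obtain ⟨y, rfl⟩ := hrange a hx
    exact ⟨y, hx⟩
  disjoint a b hab := (hXs.disjoint a b hab).preimage f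
  connected a := by
    let e : G'.induce (f ⁻¹' Xs a) ↪g G.induce (Xs a) :=
      { toFun := fun v => ⟨f v, v.2⟩
        inj' := fun u v h => Subtype.ext (f.injective (congrArg Subtype.val h))
        map_rel_iff' := f.map_adj_iff }
    have he : Function.Surjective e := by
      rintro ⟨x, hx⟩
      obtain ⟨y, rfl⟩ := hrange a hx
      exact ⟨⟨y, hx⟩, rfl⟩
    exact Iso.connected_iff (RelIso.ofSurjective e he) |>.mpr (hXs.connected a)
  exists_adj a b hab := by
    obtain ⟨x, hx, y, hy, hxy⟩ := hXs.exists_adj a b hab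
    obtain ⟨x, rfl⟩ := hrange a hx
    obtain ⟨y, rfl⟩ := hrange b hy
    exact ⟨x, hx, y, hy, f.map_adj_iff.mp hxy⟩

lemma IsMinorModel_s5.isMinorOf_induce {S U : Set α} {Xs : V → Set S}
    (hXs : IsMinorModel_s5 H (G.induce S) Xs) (hUS : U ⊆ S) (hU : ∀ a, ∀ v ∈ Xs a, (v : α) ∈ U) :
    IsMinorOf H (G.induce U) :=
  isMinorOf_iff.mpr ⟨_, hXs.preimage (G.induceHomOfLE hUS) fun a v hv => ⟨⟨v, hU a v hv⟩, rfl⟩⟩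

lemma SimpleGraph.Reachable.apply_eq_of_forall_adj {f : α → γ}
    (hf : ∀ u v, G.Adj u v → f u = f v) {u v : α} (h : G.Reachable u v) : f u = f v := by
  obtain ⟨p⟩ := h
  induction p with
  | nil => rfl
  | cons huv _ ih => exact (hf _ _ huv).trans ih

lemma IsMinorModel_s5.exists_eq_const {Xs : V → Set α} (hXs : IsMinorModel_s5 H G Xs)
    (hH : H.Connected) {f : α → γ} (hf : ∀ u v, G.Adj u v → f u = f v) :
    ∃ c, ∀ a, ∀ v ∈ Xs a, f v = c := by
  have hbranch : ∀ a, ∀ u ∈ Xs a, ∀ v ∈ Xs a, f u = f v := fun a u hu v hv =>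
    ((hXs.connected a).preconnected ⟨u, hu⟩ ⟨v, hv⟩).apply_eq_of_forall_adj
      (f := fun w : Xs a => f w) fun _ _ h => hf _ _ h
  choose rep hrep using hXs.nonempty
  have hH' : ∀ a b, H.Adj a b → f (rep a) = f (rep b) := fun a b hab => by
    obtain ⟨x, hx, y, hy, hxy⟩ := hXs.exists_adj a b hab
    rw [hbranch a _ (hrep a) x hx, hf x y hxy, hbranch b y hy _ (hrep b)]
  obtain ⟨a₀⟩ := hH.nonempty
  exact ⟨f (rep a₀), fun a v hv =>
    (hbranch a v hv _ (hrep a)).trans ((hH.preconnected a a₀).apply_eq_of_forall_adj hH')⟩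

end Minor

section Expansion

variable {V W : Type*} {H : SimpleGraph V} {G : SimpleGraph W}

lemma induce_le_dissolve (K : SimpleGraph W) (T : Set W) : K.induce T ≤ dissolve K T := by
  intro u v huv
  have huv' : K.Adj u v := huv
  refine (fromRel_adj _ _ _).mpr ⟨huv.ne, Or.inl ⟨huv'.toWalk, fun w hw hwu hwv => ?_⟩⟩
  rw [huv'.support_toWalk, List.mem_pair] at hw
  exact (hw.elim hwu hwv).elim

lemma isExpansion_induce {U : Set W} (h : IsMinorOf H (G.induce U)) :
    IsExpansion H ((⊤ : G.Subgraph).induce U) U := by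
  refine ⟨subset_rfl, fun v hv hvU => absurd hv hvU, ?_⟩
  refine h.of_hom ⟨fun v => ⟨⟨v, v.2⟩, v.2⟩, fun huv => induce_le_dissolve _ _ ?_⟩ ?_
  · simpa using huv
  · intro u v huv
    simpa [Subtype.ext_iff] using huv

lemma IsExpansion.exists_isInflatedCopy [Finite W] {M : G.Subgraph} {T : Set W}
    (h : IsExpansion H M T) : ∃ M' ≤ M, IsExpansion H M' T ∧ IsInflatedCopy H M' := by
  obtain ⟨M', hle, hmin⟩ := exists_minimal_le_of_wellFoundedLT (IsExpansion H · T) M h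
  exact ⟨M', hle, hmin.prop, T, hmin.prop, fun M'' hle' h'' => le_antisymm hle' (hmin.2 h'' hle')⟩

lemma exists_isInflatedCopy_verts_eq [Finite W] {U : Set W} (h : IsMinorOf H (G.induce U)) :
    ∃ M : G.Subgraph, IsInflatedCopy H M ∧ M.verts = U := by
  obtain ⟨M, hle, hM, hcopy⟩ := (isExpansion_induce h).exists_isInflatedCopy
  exact ⟨M, hcopy, (Subgraph.verts_mono hle).antisymm hM.1⟩

end Expansion

lemma mem_iff_mem_of_adj_of_separation {W : Type*} {G : SimpleGraph W} {X Y : Set W}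
    (hunion : X ∪ Y = Set.univ) (hsep : ∀ a ∈ X \ Y, ∀ b ∈ Y \ X, ¬ G.Adj a b) {u v : W}
    (hu : u ∉ X ∩ Y) (hv : v ∉ X ∩ Y) (huv : G.Adj u v) : u ∈ X ↔ v ∈ X := by
  have hu' : u ∈ X ∪ Y := hunion ▸ Set.mem_univ u
  have hv' : v ∈ X ∪ Y := hunion ▸ Set.mem_univ v
  constructor
  · intro huX
    by_contra hvX
    exact hsep u ⟨huX, fun h => hu ⟨huX, h⟩⟩ v ⟨hv'.resolve_left hvX, hvX⟩ huv
  · intro hvX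
    by_contra huX
    exact hsep v ⟨hvX, fun h => hv ⟨hvX, h⟩⟩ u ⟨hu'.resolve_left huX, huX⟩ huv.symm

theorem stmt_5_general {V : Type*} {W : Type*} [Fintype W]
    (H : SimpleGraph V) (hconn : H.Connected) (G : SimpleGraph W)
    (X Y : Set W) (hunion : X ∪ Y = Set.univ)
    (hsep : ∀ a ∈ X \ Y, ∀ b ∈ Y \ X, ¬ G.Adj a b)
    (hloc : IsLocalCover H G X (X ∩ Y))
    (hY : ¬ IsMinorOf H (G.induce (Y \ X))) :
    ¬ IsMinorOf H (G.induce (X ∩ Y)ᶜ) := by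
  intro h
  obtain ⟨Xs, hXs⟩ := isMinorOf_iff.mp h
  obtain ⟨inX, hside⟩ := hXs.exists_eq_const hconn (f := fun v : ↥(X ∩ Y)ᶜ => (v : W) ∈ X)
    fun u v huv => propext (mem_iff_mem_of_adj_of_separation hunion hsep u.2 v.2 huv)
  by_cases hinX : inX
  · have hXY : ∀ a, ∀ v ∈ Xs a, (v : W) ∈ X \ Y := fun a v hv =>
      have hvX : (v : W) ∈ X := (hside a v hv).mpr hinX
      ⟨hvX, fun hvY => v.2 ⟨hvX, hvY⟩⟩
    obtain ⟨M, hM, hverts⟩ :=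
      exists_isInflatedCopy_verts_eq (hXs.isMinorOf_induce (fun v hv h => hv.2 h.2) hXY)
    obtain ⟨a₀⟩ := hconn.nonempty
    obtain ⟨v₀, hv₀⟩ := hXs.nonempty a₀
    obtain ⟨w, hwM, hwXY⟩ := hloc.2 M hM ⟨v₀, hverts ▸ hXY a₀ v₀ hv₀, (hXY a₀ v₀ hv₀).1⟩
    exact (hverts ▸ hwM : w ∈ X \ Y).2 hwXY.2
  · refine hY (hXs.isMinorOf_induce (fun v hv h => hv.2 h.1) fun a v hv => ?_)
    have hvX : (v : W) ∉ X := fun hvX => hinX ((hside a v hv).mp hvX)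
    exact ⟨((hunion ▸ Set.mem_univ (v : W)) : (v : W) ∈ X ∪ Y).resolve_left hvX, hvX⟩

/-- Observation 5.10, for connected `H`. Let `H` be a connected graph with at
least one vertex, `G` a graph, and `(X, Y)` a separation of `G` such that `(X, X ∩ Y)` is an
`H`-local cover of `G` and `G[Y ∖ X]` has no `H`-minor.  Then `X ∩ Y` is an `H`-cover of `G`. -/
theorem stmt_5 {V : Type*} {W : Type*} [Fintype V] [Fintype W]
    (H : SimpleGraph V) (hconn : H.Connected) (G : SimpleGraph W)
    (X Y : Set W) (hunion : X ∪ Y = Set.univ)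
    (hsep : ∀ a ∈ X \ Y, ∀ b ∈ Y \ X, ¬ G.Adj a b)
    (hloc : IsLocalCover H G X (X ∩ Y))
    (hY : ¬ IsMinorOf H (G.induce (Y \ X))) :
    ¬ IsMinorOf H (G.induce (X ∩ Y)ᶜ) :=
  stmt_5_general H hconn G X Y hunion hsep hloc hY
end

section
/- For every r ∈ ℕ there exists k ∈ ℕ such that the complete bipartite graph K_{3,r} is a minor of the shallow-vortex grid V_k; that is, K_{3,r} is a shallow-vortex minor for every r. (Claim stated in Section 1.1 of the paper.) -/
/-!
`V_k` is the quotient, by the columns modulo `4k`, of an infinite strip `ℕ × ℕ` whose row `0`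
carries the crossing edges. In the strip, row `3` and two `8`-periodic tracks in rows `0`–`2`,
which cross each other only through crossing edges, are disjoint connected sets, and every vertex
`(2, 3 + 8t)` is adjacent to all three without meeting them modulo `8`. For even `k ≥ max 4 (2r)`
these sets and `r` such vertices descend to branch sets of `K_{3,r}` in `V_k`.
-/

open SimpleGraph

/-- The shallow-vortex grid `V_k`: the `(k, 4k)`-cylindrical grid together with, for each
`i < k`, the two crossing edges `v^1_{4i+1} v^1_{4i+3}` and `v^1_{4i+2} v^1_{4i+4}` on the
first cycle. -/
def shallowVortexGrid (k : ℕ) : SimpleGraph (Fin k × ZMod (4 * k)) :=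
  SimpleGraph.fromRel fun p q =>
    cylRel k (4 * k) p q ∨
    ((p.1 : ℕ) = 0 ∧ (q.1 : ℕ) = 0 ∧ ∃ i < k,
      ((p.2 = ((4 * i + 1 : ℕ) : ZMod (4 * k)) ∧ q.2 = ((4 * i + 3 : ℕ) : ZMod (4 * k))) ∨
       (p.2 = ((4 * i + 2 : ℕ) : ZMod (4 * k)) ∧ q.2 = ((4 * i + 4 : ℕ) : ZMod (4 * k)))))

lemma SimpleGraph.connected_induce_range_of_adj_succ {W : Type*} {G : SimpleGraph W} {f : ℕ → W}
    (h : ∀ m, G.Adj (f m) (f (m + 1))) : (G.induce (Set.range f)).Connected := by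
  rw [connected_iff_exists_forall_reachable]
  refine ⟨⟨f 0, 0, rfl⟩, ?_⟩
  rintro ⟨_, m, rfl⟩
  induction m with
  | zero => rfl
  | succ m ih => exact ih.trans (Adj.reachable (h m))

lemma ZMod.natCast_ne_natCast_add {N : ℕ} (c : ℕ) {d : ℕ} (hd : 0 < d) (hdN : d < N) :
    (c : ZMod N) ≠ ((c + d : ℕ) : ZMod N) := by
  intro h
  push_cast at h
  have hd0 : ((d : ℕ) : ZMod N) = 0 := by simpa using h.symm
  exact absurd (Nat.le_of_dvd hd ((ZMod.natCast_eq_zero_iff d N).mp hd0)) (by omega)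

lemma ZMod.natCast_mul_mod_add (a k u b : ℕ) :
    ((a * (u % k) + b : ℕ) : ZMod (a * k)) = ((a * u + b : ℕ) : ZMod (a * k)) := by
  rw [ZMod.natCast_eq_natCast_iff]
  exact ((Nat.mod_modEq u k).mul_left' a).add_right b

namespace ShallowVortex

/-- A step in the infinite strip covering every `V_k`; points are `(row, column)`. -/
def StripStep (p q : ℕ × ℕ) : Prop :=
  (p.1 = q.1 ∧ q.2 = p.2 + 1) ∨ (p.2 = q.2 ∧ q.1 = p.1 + 1) ∨
    (p.1 = 0 ∧ q.1 = 0 ∧ q.2 = p.2 + 2 ∧ (p.2 % 4 = 1 ∨ p.2 % 4 = 2))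

instance : DecidableRel StripStep := fun p q => by unfold StripStep; infer_instance

def StripAdj (p q : ℕ × ℕ) : Prop := StripStep p q ∨ StripStep q p

instance : DecidableRel StripAdj := fun p q => by unfold StripAdj; infer_instance

def colShift (c : ℕ) (p : ℕ × ℕ) : ℕ × ℕ := (p.1, p.2 + c)

lemma StripStep.colShift {p q : ℕ × ℕ} {c : ℕ} (h : StripStep p q) (hc : 4 ∣ c) :
    StripStep (colShift c p) (colShift c q) := by
  obtain ⟨d, rfl⟩ := hc
  unfold StripStep at *
  simp only [ShallowVortex.colShift]
  omega

lemma StripAdj.colShift {p q : ℕ × ℕ} {c : ℕ} (h : StripAdj p q) (hc : 4 ∣ c) :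
    StripAdj (colShift c p) (colShift c q) :=
  h.imp (·.colShift hc) (·.colShift hc)

def colMod8 (p : ℕ × ℕ) : ℕ × ℕ := (p.1, p.2 % 8)

section PeriodicTrack

variable {n : ℕ} [NeZero n]

def periodicTrack (pat : Fin n → ℕ × ℕ) (m : ℕ) : ℕ × ℕ :=
  colShift (8 * (m / n)) (pat (Fin.ofNat n m))

lemma periodicTrack_add_mul (pat : Fin n → ℕ × ℕ) (j : Fin n) (t : ℕ) :
    periodicTrack pat (j + n * t) = colShift (8 * t) (pat j) := by
  have hn : 0 < n := Nat.pos_of_neZero n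
  have hdiv : (j + n * t) / n = t := by
    rw [Nat.add_mul_div_left _ _ hn, Nat.div_eq_of_lt j.isLt, zero_add]
  have hmod : Fin.ofNat n (j + n * t) = j := by ext; simp [Nat.mod_eq_of_lt j.isLt]
  rw [periodicTrack, hdiv, hmod]

lemma periodicTrack_add_self (pat : Fin n → ℕ × ℕ) (m : ℕ) :
    periodicTrack pat (m + n) = colShift 8 (periodicTrack pat m) := by
  have hn : 0 < n := Nat.pos_of_neZero n
  have hmod : Fin.ofNat n (m + n) = Fin.ofNat n m := by ext; simp
  simp only [periodicTrack, ShallowVortex.colShift, hmod, Nat.add_div_right _ hn]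
  ring_nf

lemma stripAdj_periodicTrack_succ {pat : Fin n → ℕ × ℕ}
    (h : ∀ m < n, StripAdj (periodicTrack pat m) (periodicTrack pat (m + 1))) (m : ℕ) :
    StripAdj (periodicTrack pat m) (periodicTrack pat (m + 1)) := by
  have hn : 0 < n := Nat.pos_of_neZero n
  induction m using Nat.strong_induction_on with
  | _ m ih =>
    rcases lt_or_ge m n with hm | hm
    · exact h m hm
    · obtain ⟨l, rfl⟩ := Nat.exists_eq_add_of_le' hm
      rw [periodicTrack_add_self, Nat.add_right_comm, periodicTrack_add_self]
      exact (ih l (by omega)).colShift (by norm_num)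

lemma colMod8_periodicTrack_mem (pat : Fin n → ℕ × ℕ) (m : ℕ) :
    colMod8 (periodicTrack pat m) ∈ Finset.univ.image (colMod8 ∘ pat) := by
  refine Finset.mem_image.mpr ⟨Fin.ofNat n m, Finset.mem_univ _, ?_⟩
  simp only [Function.comp, colMod8, periodicTrack, ShallowVortex.colShift, Prod.mk.injEq,
    true_and]
  omega

end PeriodicTrack

section Grid

variable {k : ℕ} [NeZero k]

def toGrid (k : ℕ) [NeZero k] (p : ℕ × ℕ) : Fin k × ZMod (4 * k) := (Fin.ofNat k p.1, p.2)

lemma toGrid_eq_toGrid_iff {p q : ℕ × ℕ} (hp : p.1 < k) (hq : q.1 < k) :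
    toGrid k p = toGrid k q ↔ p.1 = q.1 ∧ p.2 ≡ q.2 [MOD 4 * k] := by
  simp only [toGrid, Prod.mk.injEq, Fin.ext_iff, Fin.val_ofNat, Nat.mod_eq_of_lt hp,
    Nat.mod_eq_of_lt hq, ZMod.natCast_eq_natCast_iff]

lemma shallowVortexGrid_adj_toGrid_of_stripStep {p q : ℕ × ℕ} (h : StripStep p q)
    (hp : p.1 < k) (hq : q.1 < k) : (shallowVortexGrid k).Adj (toGrid k p) (toGrid k q) := by
  have hk : 0 < k := Nat.pos_of_neZero k
  rw [shallowVortexGrid, fromRel_adj]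
  rcases h with ⟨hrow, hcol⟩ | ⟨hcol, hrow⟩ | ⟨hp0, hq0, hcol, hres⟩
  · refine ⟨fun he => ?_, Or.inl (Or.inl ?_)⟩
    · refine ZMod.natCast_ne_natCast_add (N := 4 * k) p.2 one_pos (by omega) ?_
      rw [← hcol]; exact congrArg Prod.snd he
    · refine Or.inl ⟨by rw [toGrid, toGrid, hrow], ?_⟩
      simp [toGrid, hcol]
  · refine ⟨fun he => ?_, Or.inl (Or.inl (Or.inr ⟨by rw [toGrid, toGrid, hcol], ?_⟩))⟩
    · have := ((toGrid_eq_toGrid_iff hp hq).mp he).1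
      omega
    · simp [toGrid, hrow, Nat.mod_eq_of_lt hp, Nat.mod_eq_of_lt (hrow ▸ hq)]
  · refine ⟨fun he => ?_, Or.inl (Or.inr ?_)⟩
    · refine ZMod.natCast_ne_natCast_add (N := 4 * k) p.2 two_pos (by omega) ?_
      rw [← hcol]; exact congrArg Prod.snd he
    · have hfst (x : ℕ × ℕ) (hx : x.1 = 0) : ((toGrid k x).1 : ℕ) = 0 := by
        simp [toGrid, hx]
      refine ⟨hfst p hp0, hfst q hq0, p.2 / 4 % k, Nat.mod_lt _ hk, ?_⟩
      simp only [toGrid, hcol]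
      rcases hres with hres | hres
      · left
        constructor <;> rw [ZMod.natCast_mul_mod_add] <;> congr 1 <;> omega
      · right
        constructor <;> rw [ZMod.natCast_mul_mod_add] <;> congr 1 <;> omega

lemma shallowVortexGrid_adj_toGrid {p q : ℕ × ℕ} (h : StripAdj p q)
    (hp : p.1 < k) (hq : q.1 < k) : (shallowVortexGrid k).Adj (toGrid k p) (toGrid k q) :=
  h.elim (shallowVortexGrid_adj_toGrid_of_stripStep · hp hq)
    fun h' => (shallowVortexGrid_adj_toGrid_of_stripStep h' hq hp).symm

lemma colMod8_eq_of_toGrid_eq (hk : 2 ∣ k) {p q : ℕ × ℕ} (hp : p.1 < k) (hq : q.1 < k)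
    (h : toGrid k p = toGrid k q) : colMod8 p = colMod8 q := by
  obtain ⟨hrow, hcol⟩ := (toGrid_eq_toGrid_iff hp hq).mp h
  exact Prod.ext hrow (hcol.of_dvd (by obtain ⟨j, rfl⟩ := hk; exact ⟨j, by ring⟩))

end Grid

/-- One period of each of the three big branch sets: row `3`, and two tracks in rows `0`–`2`
that pass through each other by the crossing edges. -/
def pattern : Fin 3 → Σ n, Fin n → ℕ × ℕ :=
  ![⟨8, fun c => (3, c)⟩,
    ⟨10, ![(2, 0), (2, 1), (2, 2), (1, 2), (0, 2), (0, 4), (0, 5), (0, 7), (1, 7), (2, 7)]⟩,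
    ⟨10, ![(1, 0), (1, 1), (0, 1), (0, 3), (1, 3), (1, 4), (1, 5), (1, 6), (0, 6), (0, 8)]⟩]

instance (i : Fin 3) : NeZero (pattern i).1 := ⟨by fin_cases i <;> decide⟩

def bigTrack (i : Fin 3) : ℕ → ℕ × ℕ := periodicTrack (pattern i).2

def spoke (t : ℕ) : ℕ × ℕ := (2, 3 + 8 * t)

lemma stripAdj_bigTrack_succ (i : Fin 3) (m : ℕ) : StripAdj (bigTrack i m) (bigTrack i (m + 1)) :=
  stripAdj_periodicTrack_succ (by fin_cases i <;> decide) m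

lemma bigTrack_fst_lt (i : Fin 3) (m : ℕ) : (bigTrack i m).1 < 4 := by
  have h : ∀ j, ((pattern i).2 j).1 < 4 := by fin_cases i <;> decide
  exact h _

lemma colMod8_bigTrack_ne (i j : Fin 3) (hij : i ≠ j) (m m' : ℕ) :
    colMod8 (bigTrack i m) ≠ colMod8 (bigTrack j m') := by
  have hdisj : Disjoint (Finset.univ.image (colMod8 ∘ (pattern i).2))
      (Finset.univ.image (colMod8 ∘ (pattern j).2)) := by
    revert hij; fin_cases i <;> fin_cases j <;> decide
  exact Finset.disjoint_iff_ne.mp hdisj _ (colMod8_periodicTrack_mem _ m) _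
    (colMod8_periodicTrack_mem _ m')

lemma colMod8_bigTrack_ne_spoke (i : Fin 3) (m t : ℕ) :
    colMod8 (bigTrack i m) ≠ colMod8 (spoke t) := by
  have hspoke : colMod8 (spoke t) = (2, 3) := by simp [colMod8, spoke, Nat.add_mod]
  have hmiss : (2, 3) ∉ Finset.univ.image (colMod8 ∘ (pattern i).2) := by
    fin_cases i <;> decide
  rw [hspoke]
  exact fun h => hmiss (h ▸ colMod8_periodicTrack_mem _ m)

lemma exists_stripAdj_bigTrack_spoke (i : Fin 3) (t : ℕ) :
    ∃ m, StripAdj (bigTrack i m) (spoke t) := by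
  have hspoke : spoke t = colShift (8 * t) (2, 3) := rfl
  have hshift : 4 ∣ 8 * t := Dvd.dvd.mul_right (by norm_num) t
  obtain ⟨j, hj⟩ : ∃ j, StripAdj ((pattern i).2 j) (2, 3) := by fin_cases i <;> decide
  refine ⟨j + (pattern i).1 * t, ?_⟩
  rw [bigTrack, periodicTrack_add_mul, hspoke]
  exact hj.colShift hshift

section Minor

variable {k : ℕ} [NeZero k]

def branchSet (k r : ℕ) [NeZero k] : Fin 3 ⊕ Fin r → Set (Fin k × ZMod (4 * k)) :=
  Sum.elim (fun i => Set.range (toGrid k ∘ bigTrack i)) (fun t => {toGrid k (spoke t)})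

lemma toGrid_bigTrack_ne_spoke (hk4 : 4 ≤ k) (hk2 : 2 ∣ k) (i : Fin 3) (m t : ℕ) :
    toGrid k (bigTrack i m) ≠ toGrid k (spoke t) := fun h =>
  colMod8_bigTrack_ne_spoke i m t <| colMod8_eq_of_toGrid_eq hk2
    ((bigTrack_fst_lt i m).trans_le hk4) (by simp only [spoke]; omega) h

lemma eq_of_toGrid_spoke_eq (hk : 2 < k) {s t : ℕ} (hs : 3 + 8 * s < 4 * k)
    (ht : 3 + 8 * t < 4 * k) (h : toGrid k (spoke s) = toGrid k (spoke t)) : s = t := by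
  have hrow (u : ℕ) : (spoke u).1 < k := hk
  have hcol := ((toGrid_eq_toGrid_iff (hrow s) (hrow t)).mp h).2
  simp only [spoke] at hcol
  rw [Nat.ModEq, Nat.mod_eq_of_lt hs, Nat.mod_eq_of_lt ht] at hcol
  omega

lemma disjoint_branchSet {r : ℕ} (hk4 : 4 ≤ k) (hk2 : 2 ∣ k) (hr : 2 * r ≤ k)
    {a b : Fin 3 ⊕ Fin r} (hab : a ≠ b) : Disjoint (branchSet k r a) (branchSet k r b) := by
  have hrow (i : Fin 3) (m : ℕ) : (bigTrack i m).1 < k := (bigTrack_fst_lt i m).trans_le hk4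
  have hspoke (t : Fin r) : 3 + 8 * (t : ℕ) < 4 * k := by omega
  rcases a with i | s <;> rcases b with j | t <;>
    simp only [branchSet, Sum.elim_inl, Sum.elim_inr]
  · rw [Set.disjoint_left]
    rintro _ ⟨m, rfl⟩ ⟨m', h⟩
    exact colMod8_bigTrack_ne i j (fun hij => hab (hij ▸ rfl)) m m'
      (colMod8_eq_of_toGrid_eq hk2 (hrow i m) (hrow j m') h.symm)
  · exact Set.disjoint_singleton_right.mpr fun ⟨m, h⟩ =>
      toGrid_bigTrack_ne_spoke hk4 hk2 i m t h
  · exact Set.disjoint_singleton_left.mpr fun ⟨m, h⟩ =>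
      toGrid_bigTrack_ne_spoke hk4 hk2 j m s h
  · exact Set.disjoint_singleton.mpr fun h =>
      hab (congrArg Sum.inr (Fin.ext (eq_of_toGrid_spoke_eq (by omega) (hspoke s) (hspoke t) h)))

end Minor

theorem completeBipartiteGraph_isMinorOf_shallowVortexGrid {k r : ℕ} (hk4 : 4 ≤ k) (hk2 : 2 ∣ k)
    (hr : 2 * r ≤ k) :
    IsMinorOf (completeBipartiteGraph (Fin 3) (Fin r)) (shallowVortexGrid k) := by
  have : NeZero k := ⟨by omega⟩
  have hrow (i : Fin 3) (m : ℕ) : (bigTrack i m).1 < k := (bigTrack_fst_lt i m).trans_le hk4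
  have hspoke_row (t : ℕ) : (spoke t).1 < k := by simp only [spoke]; omega
  have hadj (i : Fin 3) (t : ℕ) :
      ∃ m, (shallowVortexGrid k).Adj (toGrid k (bigTrack i m)) (toGrid k (spoke t)) :=
    (exists_stripAdj_bigTrack_spoke i t).imp fun m hm =>
      shallowVortexGrid_adj_toGrid hm (hrow i m) (hspoke_row t)
  refine ⟨branchSet k r, ?_, fun a b => disjoint_branchSet hk4 hk2 hr, ?_, ?_⟩
  · rintro (i | t)
    · exact Set.range_nonempty _
    · exact Set.singleton_nonempty _
  · rintro (i | t)
    · exact connected_induce_range_of_adj_succ fun m =>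
        shallowVortexGrid_adj_toGrid (stripAdj_bigTrack_succ i m) (hrow i m) (hrow i (m + 1))
    · simp only [branchSet, Sum.elim_inr, induce_singleton_eq_top]
      exact connected_top
  · rintro (i | s) (j | t) hab
    · simp at hab
    · obtain ⟨m, hm⟩ := hadj i t
      exact ⟨_, ⟨m, rfl⟩, _, rfl, hm⟩
    · obtain ⟨m, hm⟩ := hadj j s
      exact ⟨_, rfl, _, ⟨m, rfl⟩, hm.symm⟩
    · simp at hab

end ShallowVortex

/-- Section 1.1. For every `r ∈ ℕ`, the complete bipartite graph `K_{3,r}` is a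
minor of the shallow-vortex grid `V_k` for some `k ≥ 1`; i.e. `K_{3,r}` is a shallow-vortex
minor. -/
theorem stmt_7 (r : ℕ) :
    ∃ k : ℕ, 1 ≤ k ∧
      IsMinorOf (completeBipartiteGraph (Fin 3) (Fin r)) (shallowVortexGrid k) :=
  ⟨2 * r + 4, by omega,
    ShallowVortex.completeBipartiteGraph_isMinorOf_shallowVortexGrid (by omega) ⟨r + 2, by ring⟩
      (by omega)⟩
end

section
/- For every integer k ≥ 3 and every finite graph G, if |E(G)| > 2^k · |V(G)| then G contains the complete graph K_k as a minor. (The combinatorial content of Proposition 4.4 of the paper, due to Robertson and Seymour.) -/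
open SimpleGraph

/-!
Induct on `k` and, for fixed `k`, on `|V|`, proving that `2^k |V| ≤ |E|` already forces a `K_k`
minor when `V` is nonempty. If some edge `xy` has fewer than `2^(k+1)` common neighbours,
contracting it loses one vertex and at most `2^(k+1)` edges, so the bound survives in the
contraction. Otherwise, for a vertex `u` with a neighbour, every vertex of `G[N(u)]` has degree at
least `2^(k+1)`, so `G[N(u)]` has at least `2^k |N(u)|` edges and hence a `K_k` minor, to which
`u` adds an apex.
-/

universe u

section

variable {α V W : Type*}

structure IsMinorModel_s9 (H : SimpleGraph α) (G : SimpleGraph V) (X : α → Set V) : Prop where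
  nonempty : ∀ a, (X a).Nonempty
  disjoint : ∀ a b, a ≠ b → Disjoint (X a) (X b)
  connected : ∀ a, (G.induce (X a)).Connected
  adj : ∀ a b, H.Adj a b → ∃ x ∈ X a, ∃ y ∈ X b, G.Adj x y

theorem isMinorOf_iff_exists_isMinorModel {H : SimpleGraph α} {G : SimpleGraph V} :
    IsMinorOf H G ↔ ∃ X, IsMinorModel_s9 H G X :=
  ⟨fun ⟨X, h₁, h₂, h₃, h₄⟩ => ⟨X, h₁, h₂, h₃, h₄⟩, fun ⟨X, h₁, h₂, h₃, h₄⟩ => ⟨X, h₁, h₂, h₃, h₄⟩⟩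

namespace SimpleGraph

theorem connected_induce_biUnion {G' : SimpleGraph W} {G : SimpleGraph V} {Y : Set W}
    {X : W → Set V} (hY : (G'.induce Y).Connected) (hX : ∀ w ∈ Y, (G.induce (X w)).Connected)
    (hadj : ∀ w ∈ Y, ∀ w' ∈ Y, G'.Adj w w' → ∃ x ∈ X w, ∃ y ∈ X w', G.Adj x y) :
    (G.induce (⋃ w ∈ Y, X w)).Connected := by
  obtain ⟨w₀, hw₀⟩ := hY.nonempty.some
  obtain ⟨u, hu⟩ := (hX w₀ hw₀).nonempty.some
  have patch : ∀ w : Y, ∃ s ⊆ ⋃ w ∈ Y, X w, X w₀ ⊆ s ∧ X w ⊆ s ∧ (G.induce s).Connected := by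
    intro w
    induction (reachable_iff_reflTransGen _ _).mp (hY.preconnected ⟨w₀, hw₀⟩ w) with
    | refl => exact ⟨X w₀, Set.subset_biUnion_of_mem hw₀, le_rfl, le_rfl, hX w₀ hw₀⟩
    | @tail w w' _ hww' ih =>
      obtain ⟨s, hsY, h₀, hw, hs⟩ := ih
      obtain ⟨x, hx, y, hy, hxy⟩ := hadj w w.2 w' w'.2 hww'
      exact ⟨s ∪ X w', Set.union_subset hsY (Set.subset_biUnion_of_mem w'.2),
        h₀.trans Set.subset_union_left, Set.subset_union_right,
        connected_induce_union hs.preconnected (hX w' w'.2).preconnected (hw hx) hy hxy⟩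
  refine induce_connected_of_patches u (Set.mem_biUnion hw₀ hu) fun hv => ?_
  obtain ⟨w, hw, hv⟩ := Set.mem_iUnion₂.mp hv
  obtain ⟨s, hsY, h₀, hws, hs⟩ := patch ⟨w, hw⟩
  exact ⟨s, hsY, h₀ hu, hws hv, hs.preconnected _ _⟩

end SimpleGraph

namespace IsMinorModel_s9

variable {H : SimpleGraph α} {G' : SimpleGraph W} {G : SimpleGraph V} {Y : α → Set W}
  {X : W → Set V}

theorem comp (hY : IsMinorModel_s9 H G' Y) (hX : IsMinorModel_s9 G' G X) :
    IsMinorModel_s9 H G fun a => ⋃ w ∈ Y a, X w where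
  nonempty a := by
    obtain ⟨w, hw⟩ := hY.nonempty a
    obtain ⟨v, hv⟩ := hX.nonempty w
    exact ⟨v, Set.mem_biUnion hw hv⟩
  disjoint a b hab := Set.disjoint_iUnion₂_left.mpr fun w hw =>
    Set.disjoint_iUnion₂_right.mpr fun w' hw' =>
      hX.disjoint w w' ((hY.disjoint a b hab).ne_of_mem hw hw')
  connected a := connected_induce_biUnion (hY.connected a) (fun w _ => hX.connected w)
    fun w _ w' _ h => hX.adj w w' h
  adj a b hab := by
    obtain ⟨w, hw, w', hw', h⟩ := hY.adj a b hab
    obtain ⟨x, hx, y, hy, hxy⟩ := hX.adj w w' h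
    exact ⟨x, Set.mem_biUnion hw hx, y, Set.mem_biUnion hw' hy, hxy⟩

theorem singleton_of_embedding (f : G' ↪g G) : IsMinorModel_s9 G' G fun w => {f w} where
  nonempty _ := Set.singleton_nonempty _
  disjoint _ _ h := Set.disjoint_singleton.mpr (f.injective.ne h)
  connected _ := by simp
  adj a b h := ⟨f a, rfl, f b, rfl, f.map_adj_iff.mpr h⟩

theorem map (hY : IsMinorModel_s9 H G' Y) (f : G' ↪g G) : IsMinorModel_s9 H G fun a => f '' Y a := by
  simpa only [Set.image_eq_iUnion] using hY.comp (singleton_of_embedding f)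

theorem fin_cons {k : ℕ} {X : Fin k → Set V} (hX : IsMinorModel_s9 (⊤ : SimpleGraph (Fin k)) G X)
    {u : V} (hu : ∀ j, X j ⊆ G.neighborSet u) :
    IsMinorModel_s9 (⊤ : SimpleGraph (Fin (k + 1))) G (Fin.cons {u} X) := by
  have hu' : ∀ j, u ∉ X j := fun j h => G.loopless.irrefl u (hu j h)
  have hadj : ∀ j, ∃ v ∈ X j, G.Adj u v := fun j =>
    (hX.nonempty j).imp fun v hv => ⟨hv, hu j hv⟩
  have hadj' : ∀ j, ∃ v ∈ X j, G.Adj v u := fun j =>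
    (hadj j).imp fun _ h => ⟨h.1, h.2.symm⟩
  constructor <;> simp only [Fin.forall_fin_succ, Fin.cons_zero, Fin.cons_succ]
  · exact ⟨Set.singleton_nonempty u, hX.nonempty⟩
  · simpa [Set.disjoint_singleton_left, Set.disjoint_singleton_right, hu'] using hX.disjoint
  · exact ⟨(by simp : (G.induce {u}).Connected), hX.connected⟩
  · simpa [hadj, hadj'] using hX.adj

end IsMinorModel_s9

namespace IsMinorOf

variable {H : SimpleGraph α} {G' : SimpleGraph W} {G : SimpleGraph V}

theorem trans (h₁ : IsMinorOf H G') (h₂ : IsMinorOf G' G) : IsMinorOf H G := by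
  obtain ⟨Y, hY⟩ := isMinorOf_iff_exists_isMinorModel.mp h₁
  obtain ⟨X, hX⟩ := isMinorOf_iff_exists_isMinorModel.mp h₂
  exact isMinorOf_iff_exists_isMinorModel.mpr ⟨_, hY.comp hX⟩

theorem top_succ_of_induce_neighborSet {k : ℕ} {u : V}
    (h : IsMinorOf (⊤ : SimpleGraph (Fin k)) (G.induce (G.neighborSet u))) :
    IsMinorOf (⊤ : SimpleGraph (Fin (k + 1))) G := by
  obtain ⟨Y, hY⟩ := isMinorOf_iff_exists_isMinorModel.mp h
  refine isMinorOf_iff_exists_isMinorModel.mpr ⟨_, (hY.map (Embedding.induce _)).fin_cons (u := u) ?_⟩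
  rintro j _ ⟨w, -, rfl⟩
  exact w.2

end IsMinorOf

theorem Nat.card_subtype_ne [Finite V] (y : V) : Nat.card {z : V // z ≠ y} = Nat.card V - 1 := by
  have := Fintype.ofFinite V
  classical
  simp [Nat.card_eq_fintype_card, Fintype.card_subtype_compl]

namespace SimpleGraph

variable {G : SimpleGraph V}

def contract (G : SimpleGraph V) (f : V → W) : SimpleGraph W :=
  fromEdgeSet (Sym2.map f '' G.edgeSet)

theorem edgeSet_contract (f : V → W) :
    (G.contract f).edgeSet = Sym2.map f '' G.edgeSet \ Sym2.diagSet :=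
  edgeSet_fromEdgeSet _

theorem isMinorModel_contract {f : V → W} (hf : ∀ w, (G.induce (f ⁻¹' {w})).Connected) :
    IsMinorModel_s9 (G.contract f) G fun w => f ⁻¹' {w} where
  nonempty w := Set.nonempty_coe_sort.mp (hf w).nonempty
  disjoint _ _ h := (Set.disjoint_singleton.mpr h).preimage f
  connected := hf
  adj a b h := by
    obtain ⟨⟨e, he, hab⟩, -⟩ := (fromEdgeSet_adj _).mp h
    induction e using Sym2.ind with
    | _ u v =>
      rcases Sym2.eq_iff.mp hab with ⟨rfl, rfl⟩ | ⟨rfl, rfl⟩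
      exacts [⟨u, rfl, v, rfl, he⟩, ⟨v, rfl, u, rfl, G.adj_symm he⟩]

section mergeOnto

variable [DecidableEq V] {x y : V}

def mergeOnto (hxy : x ≠ y) (z : V) : {z : V // z ≠ y} :=
  if h : z = y then ⟨x, hxy⟩ else ⟨z, h⟩

theorem coe_mergeOnto (hxy : x ≠ y) (z : V) :
    (mergeOnto hxy z : V) = if z = y then x else z := by
  unfold mergeOnto
  split_ifs <;> rfl

theorem mergeOnto_eq_iff (hxy : x ≠ y) {u v : V} :
    mergeOnto hxy u = mergeOnto hxy v ↔ (if u = y then x else u) = if v = y then x else v := by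
  rw [Subtype.ext_iff, coe_mergeOnto, coe_mergeOnto]

theorem preimage_mergeOnto (hxy : x ≠ y) (w : {z : V // z ≠ y}) :
    mergeOnto hxy ⁻¹' {w} = if (w : V) = x then {x, y} else {(w : V)} := by
  obtain ⟨w, hw⟩ := w
  ext z
  simp only [Set.mem_preimage, Set.mem_singleton_iff, Subtype.ext_iff, coe_mergeOnto]
  split_ifs <;> grind

theorem isMinorOf_contract_mergeOnto (h : G.Adj x y) :
    IsMinorOf (G.contract (mergeOnto h.ne)) G :=
  isMinorOf_iff_exists_isMinorModel.mpr ⟨_, isMinorModel_contract fun w => by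
    by_cases hw : (w : V) = x
    · rw [preimage_mergeOnto, if_pos hw]
      exact induce_pair_connected_of_adj h
    · rw [preimage_mergeOnto, if_neg hw]
      simp⟩

theorem ncard_edgeSet_le_contract_mergeOnto [Finite V] (h : G.Adj x y) :
    G.edgeSet.ncard ≤
      (G.contract (mergeOnto h.ne)).edgeSet.ncard + (G.commonNeighbors x y).ncard + 1 := by
  -- Away from `xy` and the edges `yw` with `w` a common neighbour, merging `y` into `x` is
  -- injective on edges and creates no loops.
  set D := insert s(x, y) ((fun w => s(y, w)) '' G.commonNeighbors x y)
  have hD : D.ncard ≤ (G.commonNeighbors x y).ncard + 1 :=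
    (Set.ncard_insert_le _ _).trans (Nat.add_le_add_right Set.ncard_image_le 1)
  have hmaps : ∀ e ∈ G.edgeSet \ D,
      Sym2.map (mergeOnto h.ne) e ∈ (G.contract (mergeOnto h.ne)).edgeSet := by
    rintro e ⟨he, heD⟩
    rw [edgeSet_contract]
    refine ⟨Set.mem_image_of_mem _ he, ?_⟩
    induction e using Sym2.ind with
    | _ u v =>
      simp only [D, Set.mem_insert_iff, Set.mem_image, mem_commonNeighbors, Sym2.eq_iff, not_or,
        not_exists, not_and, mem_edgeSet] at heD he
      simp only [Sym2.map_mk, Sym2.mem_diagSet, Sym2.mk_isDiag_iff, mergeOnto_eq_iff]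
      have := G.ne_of_adj he
      split_ifs <;> grind
  have hinj : Set.InjOn (Sym2.map (mergeOnto h.ne)) (G.edgeSet \ D) := by
    rintro e ⟨he, heD⟩ e' ⟨he', heD'⟩ hee'
    induction e using Sym2.ind with
    | _ u v =>
    induction e' using Sym2.ind with
    | _ u' v' =>
      simp only [D, Set.mem_insert_iff, Set.mem_image, mem_commonNeighbors, Sym2.eq_iff, not_or,
        not_exists, not_and, mem_edgeSet] at heD heD' he he'
      simp only [Sym2.map_mk, Sym2.eq_iff, mergeOnto_eq_iff] at hee' ⊢
      have := G.ne_of_adj he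
      have := G.ne_of_adj he'
      have := G.ne_of_adj h
      have : ∀ a b, G.Adj a b → G.Adj b a := fun _ _ hab => hab.symm
      split_ifs at hee' <;> grind
  have := Set.ncard_le_ncard_of_injOn _ hmaps hinj
  have := Set.ncard_le_ncard_sdiff_add_ncard G.edgeSet D
  omega

end mergeOnto

theorem exists_adj_of_ncard_edgeSet_pos (h : 0 < G.edgeSet.ncard) : ∃ u v, G.Adj u v :=
  ne_bot_iff_exists_adj.mp (edgeSet_nonempty.mp (Set.nonempty_of_ncard_ne_zero h.ne'))

theorem mul_card_le_two_mul_ncard_edgeSet [Finite V] {d : ℕ}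
    (h : ∀ v, d ≤ (G.neighborSet v).ncard) : d * Nat.card V ≤ 2 * G.edgeSet.ncard := by
  have := Fintype.ofFinite V
  classical
  calc d * Nat.card V = ∑ _ : V, d := by simp [mul_comm]
    _ ≤ ∑ v, G.degree v := Finset.sum_le_sum fun v _ => by
        simpa [← card_neighborSet_eq_degree, ← Nat.card_eq_fintype_card] using h v
    _ = 2 * G.edgeSet.ncard := by
        rw [sum_degrees_eq_twice_card_edges, ← coe_edgeFinset, Set.ncard_coe_finset]

theorem ncard_neighborSet_induce_neighborSet (u : V) (w : G.neighborSet u) :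
    ((G.induce (G.neighborSet u)).neighborSet w).ncard = (G.commonNeighbors u w).ncard := by
  have : (G.induce (G.neighborSet u)).neighborSet w = Subtype.val ⁻¹' G.commonNeighbors u w := by
    ext p
    simp only [mem_neighborSet, comap_adj, Function.Embedding.subtype_apply, Set.mem_preimage,
      mem_commonNeighbors, iff_and_self]
    exact fun _ => p.2
  rw [this]
  refine Set.ncard_preimage_of_injective_subset_range Subtype.val_injective ?_
  rw [Subtype.range_coe]
  exact commonNeighbors_subset_neighborSet_left _ _ _

theorem mul_ncard_neighborSet_le [Finite V] {u : V} {d : ℕ}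
    (hd : ∀ w, G.Adj u w → d ≤ (G.commonNeighbors u w).ncard) :
    d * (G.neighborSet u).ncard ≤ 2 * (G.induce (G.neighborSet u)).edgeSet.ncard := by
  rw [← Nat.card_coe_set_eq]
  exact mul_card_le_two_mul_ncard_edgeSet fun w =>
    (ncard_neighborSet_induce_neighborSet u w).symm ▸ hd w w.2

end SimpleGraph

theorem top_isMinorOf_of_two_pow_mul_card_le (k : ℕ) :
    ∀ {V : Type u} [Finite V] [Nonempty V] (G : SimpleGraph V),
      2 ^ k * Nat.card V ≤ G.edgeSet.ncard → IsMinorOf (⊤ : SimpleGraph (Fin k)) G := by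
  induction k with
  | zero =>
    intro V _ _ G _
    exact ⟨Fin.elim0, fun a => a.elim0, fun a => a.elim0, fun a => a.elim0, fun a => a.elim0⟩
  | succ k ih =>
    intro V _ _ G hE
    induction hn : Nat.card V using Nat.strong_induction_on generalizing V with
    | _ n ihn =>
      have hn₀ : 0 < n := hn ▸ Nat.card_pos
      by_cases hsparse : ∃ x y, G.Adj x y ∧ (G.commonNeighbors x y).ncard < 2 ^ (k + 1)
      · obtain ⟨x, y, hxy, hcommon⟩ := hsparse
        classical
        have : Nonempty {z // z ≠ y} := ⟨⟨x, hxy.ne⟩⟩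
        have hcount := ncard_edgeSet_le_contract_mergeOnto hxy
        have hcard : Nat.card {z // z ≠ y} = n - 1 := by rw [Nat.card_subtype_ne, hn]
        refine (ihn (n - 1) (by omega) _ ?_ hcard).trans (isMinorOf_contract_mergeOnto hxy)
        rw [hcard, Nat.mul_sub_one, ← hn]
        omega
      · push Not at hsparse
        obtain ⟨u, v, huv⟩ := exists_adj_of_ncard_edgeSet_pos
          (lt_of_lt_of_le (by positivity) (hn ▸ hE))
        have : Nonempty (G.neighborSet u) := ⟨⟨v, huv⟩⟩
        have hdense := mul_ncard_neighborSet_le (hsparse u)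
        refine (ih (G.induce (G.neighborSet u)) ?_).top_succ_of_induce_neighborSet
        rw [Nat.card_coe_set_eq]
        rw [pow_succ, mul_right_comm] at hdense
        omega

end

theorem stmt_9_general {V : Type*} [Fintype V] (G : SimpleGraph V) (k : ℕ)
    (hE : 2 ^ k * Fintype.card V < G.edgeSet.ncard) :
    IsMinorOf (⊤ : SimpleGraph (Fin k)) G := by
  obtain ⟨u, -, -⟩ := exists_adj_of_ncard_edgeSet_pos (pos_of_gt hE)
  have : Nonempty V := ⟨u⟩
  exact top_isMinorOf_of_two_pow_mul_card_le k G (Nat.card_eq_fintype_card (α := V) ▸ hE.le)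

/-- Proposition 4.4, Robertson–Seymour. For every integer `k ≥ 3` and every
finite graph `G`, if `|E(G)| > 2^k · |V(G)|` then `G` contains `K_k` as a minor. -/
theorem stmt_9 {V : Type*} [Fintype V] (G : SimpleGraph V) (k : ℕ) (hk : 3 ≤ k)
    (hE : 2 ^ k * Fintype.card V < G.edgeSet.ncard) :
    IsMinorOf (⊤ : SimpleGraph (Fin k)) G :=
  stmt_9_general G k hE
end
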